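/- The FEO coefficient vector, defined as the coefficient of X_S in the least-squares linear projection of Y_S onto the span of {1, U_1(S),…,U_{S̄−1}(S), X_S}, equals β_F = E[Σ_S]⁻¹ E[Σ_S β_S], and the corresponding intercept (after dropping the centered dummies) is α_F = E[Y_S] − β_Fᵀ μ̄. -/

import Mathlib

/-!
Within group `s` the candidate residual is `(β_F - β_s)ᵀ(X - μ_s) - ε`: the intercept and the
centered dummies span all group-specific constants, so the constant
`α_s - (β_F - β_s)ᵀμ_s` can be matched in each group, and `α_F` is the `p`-weighted average of
these constants. Against any regressor `c + bᵀX` this residual has within-group covariance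
`p_s bᵀΣ_s(β_F - β_s)`, and these terms sum to zero over the groups precisely by the definition
of `β_F`. A residual orthogonal to every regressor minimises the mean squared error
(Pythagoras in `L²`).
-/

open MeasureTheory Matrix Finset

section LeastSquares

variable {Ω : Type*} [MeasurableSpace Ω] {μ : Measure Ω}

theorem integral_sq_le_integral_add_sq {r D : Ω → ℝ} (hr : MemLp r 2 μ) (hD : MemLp D 2 μ)
    (horth : ∫ ω, D ω * r ω ∂μ = 0) :
    ∫ ω, r ω ^ 2 ∂μ ≤ ∫ ω, (r ω + D ω) ^ 2 ∂μ := by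
  have hrD : Integrable (fun ω => 2 * (D ω * r ω)) μ := (hD.integrable_mul hr).const_mul 2
  have hsq : Integrable (fun ω => r ω ^ 2 + 2 * (D ω * r ω)) μ := hr.integrable_sq.add hrD
  have hexpand : ∫ ω, (r ω + D ω) ^ 2 ∂μ
      = ∫ ω, r ω ^ 2 ∂μ + 2 * ∫ ω, D ω * r ω ∂μ + ∫ ω, D ω ^ 2 ∂μ := by
    rw [← integral_const_mul, ← integral_add hr.integrable_sq hrD,
      ← integral_add hsq hD.integrable_sq]
    exact integral_congr_ae (ae_of_all _ fun ω => by ring)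
  rw [hexpand, horth]
  linarith [integral_nonneg (μ := μ) (f := fun ω => D ω ^ 2) fun ω => sq_nonneg (D ω)]

theorem memLp_two_of_integrable_sq_of_integrable_add_one_sq [IsFiniteMeasure μ] {f : Ω → ℝ}
    (hf : Integrable (fun ω => f ω ^ 2) μ) (hf₁ : Integrable (fun ω => (f ω + 1) ^ 2) μ) :
    MemLp f 2 μ := by
  -- `f = ((f + 1)² - f² - 1) / 2` supplies the measurability that `f² ∈ L¹` alone does not
  have hint : Integrable f μ :=
    (((hf₁.sub hf).sub (integrable_const 1)).div_const 2).congr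
      (ae_of_all _ fun ω => by simp only [Pi.sub_apply]; ring)
  exact (memLp_two_iff_integrable_sq hint.aestronglyMeasurable).2 hf

end LeastSquares

theorem integral_eq_sum_setIntegral_fiber {Ω β : Type*} [MeasurableSpace Ω] [Fintype β]
    [MeasurableSpace β] [MeasurableSingletonClass β] {μ : Measure Ω} {S : Ω → β}
    (hS : Measurable S) {f : Ω → ℝ} (hf : Integrable f μ) :
    ∫ ω, f ω ∂μ = ∑ s, ∫ ω in {ω | S ω = s}, f ω ∂μ := by
  have := integral_iUnion_fintype (fun s => hS (measurableSet_singleton s))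
    (pairwise_disjoint_fiber S) fun s => hf.integrableOn (μ := μ)
  rwa [← Set.preimage_iUnion, Set.iUnion_of_singleton, Set.preimage_univ, setIntegral_univ] at this

theorem sum_measureReal_fiber_eq_one {Ω β : Type*} [MeasurableSpace Ω] [Fintype β]
    [MeasurableSpace β] [MeasurableSingletonClass β] {μ : Measure Ω} [IsProbabilityMeasure μ]
    {S : Ω → β} (hS : Measurable S) : ∑ s, μ.real {ω | S ω = s} = 1 := by
  have := sum_measureReal_preimage_singleton (μ := μ) Finset.univ (f := S)
    fun s _ => hS (measurableSet_singleton s)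
  simp only [Finset.coe_univ, Set.preimage_univ, probReal_univ] at this
  exact this

section Moments

variable {Ω ι : Type*} [MeasurableSpace Ω] [Fintype ι] {ν : Measure Ω}

theorem integral_dotProduct (b : ι → ℝ) {F : Ω → ι → ℝ}
    (hF : ∀ i, Integrable (fun ω => F ω i) ν) :
    ∫ ω, b ⬝ᵥ F ω ∂ν = b ⬝ᵥ fun i => ∫ ω, F ω i ∂ν := by
  simp only [dotProduct]
  rw [integral_finsetSum _ fun i _ => (hF i).const_mul (b i)]
  simp only [integral_const_mul]

theorem integrable_dotProduct (b : ι → ℝ) {F : Ω → ι → ℝ}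
    (hF : ∀ i, Integrable (fun ω => F ω i) ν) : Integrable (fun ω => b ⬝ᵥ F ω) ν :=
  integrable_finsetSum _ fun i _ => (hF i).const_mul (b i)

/-- `ν` need not be normalised: for `ν = P.restrict {S = s}` the matrix `M` is `p_s • Σ_s`. -/
structure CenteredMoments (ν : Measure Ω) (Z : Ω → ι → ℝ) (e : Ω → ℝ) (M : Matrix ι ι ℝ) :
    Prop where
  memLp_coord : ∀ i, MemLp (fun ω => Z ω i) 2 ν
  memLp_noise : MemLp e 2 ν
  integral_coord : ∀ i, ∫ ω, Z ω i ∂ν = 0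
  integral_noise : ∫ ω, e ω ∂ν = 0
  integral_coord_mul_noise : ∀ i, ∫ ω, Z ω i * e ω ∂ν = 0
  integral_coord_mul_coord : ∀ i j, ∫ ω, Z ω i * Z ω j ∂ν = M i j

namespace CenteredMoments

variable [IsFiniteMeasure ν] {Z : Ω → ι → ℝ} {e : Ω → ℝ} {M : Matrix ι ι ℝ}

theorem integral_const_add_dotProduct_add (h : CenteredMoments ν Z e M) (c : ℝ) (β : ι → ℝ) :
    ∫ ω, c + β ⬝ᵥ Z ω + e ω ∂ν = ν.real Set.univ * c := by
  have hZ i := (h.memLp_coord i).integrable one_le_two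
  have hlin : Integrable (fun ω => c + β ⬝ᵥ Z ω) ν :=
    (integrable_const c).add (integrable_dotProduct β hZ)
  rw [integral_add hlin (h.memLp_noise.integrable one_le_two),
    integral_add (integrable_const c) (integrable_dotProduct β hZ), integral_dotProduct β hZ,
    integral_const, h.integral_noise]
  simp [h.integral_coord]

theorem integral_const_add_dotProduct_mul (h : CenteredMoments ν Z e M) (c : ℝ)
    (b β : ι → ℝ) :
    ∫ ω, (c + b ⬝ᵥ Z ω) * (β ⬝ᵥ Z ω - e ω) ∂ν = b ⬝ᵥ (M *ᵥ β) := by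
  have hZ i := (h.memLp_coord i).integrable one_le_two
  have he := h.memLp_noise.integrable one_le_two
  have hZZ i j : Integrable (fun ω => Z ω i * Z ω j) ν :=
    (h.memLp_coord i).integrable_mul (h.memLp_coord j)
  have hZe i : Integrable (fun ω => Z ω i * e ω) ν :=
    (h.memLp_coord i).integrable_mul h.memLp_noise
  have hres : Integrable (fun ω => β ⬝ᵥ Z ω - e ω) ν := (integrable_dotProduct β hZ).sub he
  have hcoord_eq i ω :
      Z ω i * (β ⬝ᵥ Z ω - e ω) = β ⬝ᵥ (fun j => Z ω i * Z ω j) - Z ω i * e ω := by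
    simp only [dotProduct, mul_sub, Finset.mul_sum]
    ring_nf
  have hcoord i : Integrable (fun ω => Z ω i * (β ⬝ᵥ Z ω - e ω)) ν := by
    simp only [hcoord_eq]
    exact (integrable_dotProduct β (hZZ i)).sub (hZe i)
  have hcoord_int i : ∫ ω, Z ω i * (β ⬝ᵥ Z ω - e ω) ∂ν = (M *ᵥ β) i := by
    simp only [hcoord_eq]
    rw [integral_sub (integrable_dotProduct β (hZZ i)) (hZe i), integral_dotProduct β (hZZ i),
      h.integral_coord_mul_noise, sub_zero, mulVec, dotProduct_comm]
    simp only [h.integral_coord_mul_coord]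
  calc ∫ ω, (c + b ⬝ᵥ Z ω) * (β ⬝ᵥ Z ω - e ω) ∂ν
      = ∫ ω, c * (β ⬝ᵥ Z ω - e ω) + b ⬝ᵥ (fun i => Z ω i * (β ⬝ᵥ Z ω - e ω)) ∂ν := by
        refine integral_congr_ae (ae_of_all _ fun ω => ?_)
        simp only [dotProduct, add_mul, Finset.sum_mul]
        ring_nf
    _ = b ⬝ᵥ (M *ᵥ β) := by
        rw [integral_add (hres.const_mul c) (integrable_dotProduct b hcoord), integral_const_mul,
          integral_sub (integrable_dotProduct β hZ) he, integral_dotProduct β hZ,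
          integral_dotProduct b hcoord, h.integral_noise]
        simp [h.integral_coord, hcoord_int]

end CenteredMoments

end Moments

theorem add_sum_centeredDummy_eq {n : ℕ} (p c : Fin (n + 1) → ℝ) (hp : ∑ t, p t = 1)
    (s : Fin (n + 1)) :
    ∑ t, p t * c t + ∑ k : Fin n, (c k.castSucc - c (Fin.last n)) *
      ((if s = k.castSucc then 1 else 0) - p k.castSucc) = c s := by
  have hlast : ∑ k : Fin n, p k.castSucc = 1 - p (Fin.last n) := by
    rw [Fin.sum_univ_castSucc] at hp; linarith
  have hind : ∑ k : Fin n, (c k.castSucc - c (Fin.last n)) * (if s = k.castSucc then 1 else 0)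
      = c s - c (Fin.last n) := by
    induction s using Fin.lastCases with
    | last => simp [(Fin.castSucc_lt_last _).ne']
    | cast i => simp [Fin.castSucc_inj]
  have hmean : ∑ k : Fin n, (c k.castSucc - c (Fin.last n)) * p k.castSucc
      = ∑ k : Fin n, p k.castSucc * c k.castSucc - (1 - p (Fin.last n)) * c (Fin.last n) := by
    rw [← hlast, Finset.sum_mul, ← Finset.sum_sub_distrib]
    exact Finset.sum_congr rfl fun k _ => by ring
  simp only [mul_sub, Finset.sum_sub_distrib, hind, hmean,
    Fin.sum_univ_castSucc (f := fun t => p t * c t)]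
  ring

theorem sum_smul_mulVec_sub_eq_zero {ι m : Type*} [Fintype ι] [Nonempty ι] [Fintype m]
    [DecidableEq m] {w : ι → ℝ} {A : ι → Matrix m m ℝ} (hw : ∀ s, 0 < w s)
    (hA : ∀ s, (A s).PosDef) (β : ι → m → ℝ) :
    ∑ s, (w s • A s) *ᵥ ((∑ t, w t • A t)⁻¹ *ᵥ ∑ t, w t • (A t *ᵥ β t) - β s) = 0 := by
  have hpd : (∑ t, w t • A t).PosDef :=
    posDef_sum univ_nonempty fun t _ => (hA t).smul (hw t)
  rw [Finset.sum_congr rfl fun s _ => mulVec_sub _ _ _, Finset.sum_sub_distrib, ← sum_mulVec,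
    mulVec_mulVec, mul_nonsing_inv _ (isUnit_iff_ne_zero.mpr hpd.det_pos.ne'), one_mulVec]
  simp only [smul_mulVec, sub_self]

section FixedEffects

variable {Ω : Type*} {n d : ℕ} {S : Ω → Fin (n + 1)}
  {X : Ω → Fin d → ℝ} {Y ε : Ω → ℝ} {p : Fin (n + 1) → ℝ} {μv : Fin (n + 1) → Fin d → ℝ}
  {αb : Fin (n + 1) → ℝ} {βb : Fin (n + 1) → Fin d → ℝ}

def groupIntercept (αb : Fin (n + 1) → ℝ) (βb μv : Fin (n + 1) → Fin d → ℝ) (βF : Fin d → ℝ)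
    (s : Fin (n + 1)) : ℝ :=
  αb s - (βF - βb s) ⬝ᵥ μv s

theorem exists_add_sum_mul_sub_eq_residual {U : Fin n → Ω → ℝ}
    (hU : ∀ i ω, U i ω = (if S ω = i.castSucc then 1 else 0) - p i.castSucc)
    (hY : ∀ ω, Y ω = αb (S ω) + βb (S ω) ⬝ᵥ X ω + ε ω) (hp : ∑ s, p s = 1) {βF : Fin d → ℝ}
    {αF : ℝ} (hαF : αF = ∑ s, p s * groupIntercept αb βb μv βF s) :
    ∃ δ : Fin n → ℝ, ∀ ω, αF + (∑ k, δ k * U k ω) + βF ⬝ᵥ X ω - Y ω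
      = (βF - βb (S ω)) ⬝ᵥ (X ω - μv (S ω)) - ε ω := by
  set c := groupIntercept αb βb μv βF
  refine ⟨fun k => c k.castSucc - c (Fin.last n), fun ω => ?_⟩
  have hc := add_sum_centeredDummy_eq p c hp (S ω)
  simp only [← hU, ← hαF] at hc
  rw [hc, hY ω]
  simp only [c, groupIntercept, sub_dotProduct, dotProduct_sub]
  ring

variable [MeasurableSpace Ω] {P : Measure Ω}

theorem centeredMoments_fiber [IsFiniteMeasure P] (hS : Measurable S) (s : Fin (n + 1))
    {Sig : Matrix (Fin d) (Fin d) ℝ} (hps : P.real {ω | S ω = s} = p s)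
    (hmean : ∀ i, ∫ ω in {ω | S ω = s}, X ω i ∂P = p s * μv s i)
    (hcovX : ∀ i j,
      ∫ ω in {ω | S ω = s}, (X ω i - μv s i) * (X ω j - μv s j) ∂P = p s * Sig i j)
    (hY : ∀ ω, Y ω = αb (S ω) + βb (S ω) ⬝ᵥ X ω + ε ω)
    (hε : ∫ ω in {ω | S ω = s}, ε ω ∂P = 0)
    (hXε : ∀ i, ∫ ω in {ω | S ω = s}, (X ω i - μv s i) * ε ω ∂P = 0)
    (hX : ∀ b, MemLp (fun ω => b ⬝ᵥ X ω) 2 P) (hYL2 : MemLp Y 2 P) :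
    CenteredMoments (P.restrict {ω | S ω = s}) (fun ω => X ω - μv s) ε (p s • Sig) := by
  have hXi i : MemLp (fun ω => X ω i) 2 P := by simpa using hX (Pi.single i 1)
  have hfiber : ∀ᵐ ω ∂P.restrict {ω | S ω = s}, S ω = s :=
    ae_restrict_mem (hS (measurableSet_singleton s))
  refine ⟨fun i => ((hXi i).sub (memLp_const _)).restrict _, ?_, fun i => ?_, hε, hXε,
    fun i j => by simpa using hcovX i j⟩
  · refine (((hYL2.sub (memLp_const (αb s))).sub (hX (βb s))).restrict _).ae_eq ?_
    filter_upwards [hfiber] with ω hω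
    simp only [Pi.sub_apply, hY ω, hω]
    ring
  · simp only [Pi.sub_apply]
    rw [integral_sub ((hXi i).integrable one_le_two).integrableOn (integrable_const _), hmean,
      integral_const, measureReal_restrict_apply_univ, hps, smul_eq_mul, sub_self]

theorem integral_eq_sum_mul_groupMean [IsFiniteMeasure P] (hS : Measurable S)
    {M : Fin (n + 1) → Matrix (Fin d) (Fin d) ℝ}
    (hmom : ∀ s, CenteredMoments (P.restrict {ω | S ω = s}) (fun ω => X ω - μv s) ε (M s))
    (hps : ∀ s, P.real {ω | S ω = s} = p s)
    (hY : ∀ ω, Y ω = αb (S ω) + βb (S ω) ⬝ᵥ X ω + ε ω) (hY1 : Integrable Y P) :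
    ∫ ω, Y ω ∂P = ∑ s, p s * (αb s + βb s ⬝ᵥ μv s) := by
  rw [integral_eq_sum_setIntegral_fiber hS hY1]
  refine Finset.sum_congr rfl fun s _ => ?_
  rw [← hps, ← measureReal_restrict_apply_univ,
    ← (hmom s).integral_const_add_dotProduct_add _ (βb s)]
  refine integral_congr_ae ?_
  filter_upwards [ae_restrict_mem (hS (measurableSet_singleton s))] with ω hω
  simp only [hY ω, hω, dotProduct_sub]
  ring

theorem integral_mul_residual_eq_zero [IsFiniteMeasure P] (hS : Measurable S) {U : Fin n → Ω → ℝ}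
    (hU : ∀ i ω, U i ω = (if S ω = i.castSucc then 1 else 0) - p i.castSucc)
    {M : Fin (n + 1) → Matrix (Fin d) (Fin d) ℝ}
    (hmom : ∀ s, CenteredMoments (P.restrict {ω | S ω = s}) (fun ω => X ω - μv s) ε (M s))
    {βF : Fin d → ℝ} (hnormal : ∑ s, M s *ᵥ (βF - βb s) = 0) {r : Ω → ℝ}
    (hr : ∀ ω, r ω = (βF - βb (S ω)) ⬝ᵥ (X ω - μv (S ω)) - ε ω)
    (a : ℝ) (l : Fin n → ℝ) (b : Fin d → ℝ)
    (hint : Integrable (fun ω => (a + (∑ k, l k * U k ω) + b ⬝ᵥ X ω) * r ω) P) :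
    ∫ ω, (a + (∑ k, l k * U k ω) + b ⬝ᵥ X ω) * r ω ∂P = 0 := by
  rw [integral_eq_sum_setIntegral_fiber hS hint]
  have hfiber s : ∫ ω in {ω | S ω = s}, (a + (∑ k, l k * U k ω) + b ⬝ᵥ X ω) * r ω ∂P
      = b ⬝ᵥ (M s *ᵥ (βF - βb s)) := by
    rw [← (hmom s).integral_const_add_dotProduct_mul
      (a + ∑ k, l k * ((if s = k.castSucc then 1 else 0) - p k.castSucc) + b ⬝ᵥ μv s)]
    refine integral_congr_ae ?_
    filter_upwards [ae_restrict_mem (hS (measurableSet_singleton s))] with ω hω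
    simp only [hU, hr ω, hω, dotProduct_sub]
    ring
  simp only [hfiber, ← dotProduct_sum, hnormal, dotProduct_zero]

theorem integral_sub_dotProduct_eq_sum_mul_groupIntercept [IsFiniteMeasure P] (hS : Measurable S)
    {M : Fin (n + 1) → Matrix (Fin d) (Fin d) ℝ}
    (hmom : ∀ s, CenteredMoments (P.restrict {ω | S ω = s}) (fun ω => X ω - μv s) ε (M s))
    (hps : ∀ s, P.real {ω | S ω = s} = p s)
    (hY : ∀ ω, Y ω = αb (S ω) + βb (S ω) ⬝ᵥ X ω + ε ω) (hY1 : Integrable Y P) (βF : Fin d → ℝ) :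
    ∫ ω, Y ω ∂P - βF ⬝ᵥ ∑ s, p s • μv s = ∑ s, p s * groupIntercept αb βb μv βF s := by
  rw [integral_eq_sum_mul_groupMean hS hmom hps hY hY1, dotProduct_sum, ← Finset.sum_sub_distrib]
  refine Finset.sum_congr rfl fun s _ => ?_
  simp only [groupIntercept, dotProduct_smul, sub_dotProduct, smul_eq_mul]
  ring

end FixedEffects

/-- The FEO coefficient vector — the coefficient of `X_S` in the least-squares linear
projection of `Y_S` onto `{1, U_1(S), …, U_{S̄−1}(S), X_S}` — equals
`β_F = E[Σ_S]⁻¹ E[Σ_S β_S]`, and the corresponding intercept (after dropping the centered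
dummies) is `α_F = E[Y_S] − β_Fᵀ μ̄`. -/
theorem stmt2
    {Ω : Type*} [MeasurableSpace Ω] (P : Measure Ω) [IsProbabilityMeasure P]
    (n d : ℕ) (S : Ω → Fin (n + 1)) (hS : Measurable S)
    (X : Ω → Fin d → ℝ) (Y : Ω → ℝ) (ε : Ω → ℝ)
    (p : Fin (n + 1) → ℝ) (μv : Fin (n + 1) → Fin d → ℝ)
    (Sig : Fin (n + 1) → Matrix (Fin d) (Fin d) ℝ)
    (αb : Fin (n + 1) → ℝ) (βb : Fin (n + 1) → Fin d → ℝ)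
    (hp : ∀ s, 0 < p s)
    (hmeas : ∀ s, P {ω | S ω = s} = ENNReal.ofReal (p s))
    (hmean : ∀ s i, ∫ ω in {ω | S ω = s}, X ω i ∂P = p s * μv s i)
    (hcovX : ∀ s i j,
      ∫ ω in {ω | S ω = s}, (X ω i - μv s i) * (X ω j - μv s j) ∂P = p s * Sig s i j)
    (hSigPD : ∀ s, (Sig s).PosDef)
    (hY : ∀ ω, Y ω = αb (S ω) + βb (S ω) ⬝ᵥ X ω + ε ω)
    (hε : ∀ s, ∫ ω in {ω | S ω = s}, ε ω ∂P = 0)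
    (hXε : ∀ s i, ∫ ω in {ω | S ω = s}, (X ω i - μv s i) * ε ω ∂P = 0)
    -- centered bank dummy variables
    (U : Fin n → Ω → ℝ)
    (hU : ∀ i ω, U i ω = (if S ω = i.castSucc then 1 else 0) - p i.castSucc)
    (hint : ∀ (a : ℝ) (l : Fin n → ℝ) (b : Fin d → ℝ),
      Integrable (fun ω => (a + (∑ k, l k * U k ω) + b ⬝ᵥ X ω - Y ω) ^ 2) P)
    (μbar : Fin d → ℝ) (hμbar : μbar = ∑ s, p s • μv s)
    (βF : Fin d → ℝ)
    (hβF : βF = (∑ s, p s • Sig s)⁻¹ *ᵥ (∑ s, p s • (Sig s *ᵥ βb s)))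
    (αF : ℝ) (hαF : αF = (∫ ω, Y ω ∂P) - βF ⬝ᵥ μbar) :
    ∃ δ : Fin n → ℝ, ∀ (a : ℝ) (l : Fin n → ℝ) (b : Fin d → ℝ),
      ∫ ω, (αF + (∑ k, δ k * U k ω) + βF ⬝ᵥ X ω - Y ω) ^ 2 ∂P
        ≤ ∫ ω, (a + (∑ k, l k * U k ω) + b ⬝ᵥ X ω - Y ω) ^ 2 ∂P := by
  have hps s : P.real {ω | S ω = s} = p s := by
    rw [measureReal_def, hmeas, ENNReal.toReal_ofReal (hp s).le]
  have hpsum : ∑ s, p s = 1 := by simpa only [hps] using sum_measureReal_fiber_eq_one (μ := P) hS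
  have hresL2 (a : ℝ) (l : Fin n → ℝ) (b : Fin d → ℝ) :
      MemLp (fun ω => a + (∑ k, l k * U k ω) + b ⬝ᵥ X ω - Y ω) 2 P :=
    memLp_two_of_integrable_sq_of_integrable_add_one_sq (hint a l b)
      ((hint (a + 1) l b).congr (ae_of_all _ fun ω => by ring))
  have hYL2 : MemLp Y 2 P := (hresL2 0 0 0).neg.ae_eq (ae_of_all _ fun ω => by simp)
  have hfitL2 (a : ℝ) (l : Fin n → ℝ) (b : Fin d → ℝ) :
      MemLp (fun ω => a + (∑ k, l k * U k ω) + b ⬝ᵥ X ω) 2 P :=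
    ((hresL2 a l b).add hYL2).ae_eq (ae_of_all _ fun ω => by simp)
  have hmom s := centeredMoments_fiber hS s (hps s) (hmean s) (hcovX s) hY (hε s) (hXε s)
    (fun b => by simpa using hfitL2 0 0 b) hYL2
  have hαc : αF = ∑ s, p s * groupIntercept αb βb μv βF s := by
    rw [hαF, hμbar]
    exact integral_sub_dotProduct_eq_sum_mul_groupIntercept hS hmom hps hY
      (hYL2.integrable one_le_two) βF
  obtain ⟨δ, hres⟩ := exists_add_sum_mul_sub_eq_residual hU hY hpsum hαc
  refine ⟨δ, fun a l b => ?_⟩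
  have horth := integral_mul_residual_eq_zero hS hU hmom
    (hβF ▸ sum_smul_mulVec_sub_eq_zero hp hSigPD βb) hres (a - αF) (l - δ) (b - βF)
    ((hfitL2 _ _ _).integrable_mul (hresL2 _ _ _))
  convert integral_sq_le_integral_add_sq (hresL2 αF δ βF) (hfitL2 _ _ _) horth using 3 with ω
  simp only [Pi.sub_apply, sub_mul, Finset.sum_sub_distrib, sub_dotProduct]
  ring
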